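/- Let P₁ = X³ + 2X²Z + 4XZ² + 8Z³ + 4XYW + 8YZW and P₂ = X³ + 2Y³ + 6XZ² + 4Z³ + 12YZW + 2W³ in ℤ[X,Y,Z,W]. Then P₁ ≠ P₂, and with X = θ^{(3,d)}_{0,0}, Y = θ^{(3,d)}_{1,0}, Z = θ^{(3,d)}_{0,1}, W = θ^{(3,d)}_{1,1}: for d = 3 (level ℓ = 11) one has P₁(X,Y,Z,W) = P₂(X,Y,Z,W) in ℤ[[q]], while for d = 6 (level ℓ = 23) one has P₁(X,Y,Z,W) ≠ P₂(X,Y,Z,W). -/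

import Mathlib

noncomputable section

/-- The positive definite quadratic form `Q_d(x,y) = x² + xy + d y²`. -/
def Qform (d : ℕ) (x y : ℤ) : ℤ := x ^ 2 + x * y + (d : ℤ) * y ^ 2

/-- The coset theta series `θ^{(p,d)}_{a,b}`. -/
def cosetTheta (p d : ℕ) (a b : ℤ) : PowerSeries ℤ :=
  PowerSeries.mk fun k =>
    (Set.ncard {mn : ℤ × ℤ |
      Qform d ((p : ℤ) * mn.1 + a) ((p : ℤ) * mn.2 + b) = (k : ℤ)} : ℤ)

/-- The four coset theta series for `p = 3`:
`X = θ_{0,0}`, `Y = θ_{1,0}`, `Z = θ_{0,1}`, `W = θ_{1,1}`. -/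
def T3 (d : ℕ) : Fin 4 → PowerSeries ℤ :=
  ![cosetTheta 3 d 0 0, cosetTheta 3 d 1 0, cosetTheta 3 d 0 1, cosetTheta 3 d 1 1]

open MvPolynomial in
/-- `P₁ = X³ + 2X²Z + 4XZ² + 8Z³ + 4XYW + 8YZW`. -/
def P1 : MvPolynomial (Fin 4) ℤ :=
  X 0 ^ 3 + 2 * X 0 ^ 2 * X 2 + 4 * X 0 * X 2 ^ 2 + 8 * X 2 ^ 3 +
    4 * X 0 * X 1 * X 3 + 8 * X 1 * X 2 * X 3

open MvPolynomial in
/-- `P₂ = X³ + 2Y³ + 6XZ² + 4Z³ + 12YZW + 2W³`. -/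
def P2 : MvPolynomial (Fin 4) ℤ :=
  X 0 ^ 3 + 2 * X 1 ^ 3 + 6 * X 0 * X 2 ^ 2 + 4 * X 2 ^ 3 +
    12 * X 1 * X 2 * X 3 + 2 * X 3 ^ 3

/-!
Construction A: for a code `C` of length 3 over `𝔽₃²`, the sum over `c ∈ C` of
`θ_{c₁} θ_{c₂} θ_{c₃}` is the theta series, for `Q_d ⊕ Q_d ⊕ Q_d`, of the lattice `Λ_C ⊆ ℤ⁶` of
vectors whose residues mod 3 lie in `C`. Since `θ_r` is invariant under `r ↦ -r` and
`(a, b) ↦ (-a-b, b)`, it only depends on which of the four orbits `X, Y, Z, W` contains `r`, and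
the sum collapses to the symmetrized weight enumerator, which is `P₁` resp. `P₂` for the two codes
below.

For `d = 3` the lattices `Λ₁` and `Λ₂` are isometric, so their theta series agree. For `d = 6`
they differ at `q³`: a vector of norm 3 has all second coordinates zero and all first coordinates
`±1`; `Λ₂` contains `((1,0),(1,0),(1,0))`, while `Λ₁` forces two first coordinates to vanish
mod 3.
-/

def thetaSeries {α : Type*} (q : α → ℕ) (S : Set α) : PowerSeries ℤ :=
  PowerSeries.mk fun k => ((S ∩ q ⁻¹' {k}).ncard : ℤ)

section ThetaSeries

open Set Function Finset.HasAntidiagonal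

variable {α β ι : Type*}

@[simp]
lemma coeff_thetaSeries (q : α → ℕ) (S : Set α) (k : ℕ) :
    PowerSeries.coeff k (thetaSeries q S) = ((S ∩ q ⁻¹' {k}).ncard : ℤ) :=
  PowerSeries.coeff_mk _ _

lemma finite_inter_preimage_singleton {q : α → ℕ} (hq : ∀ k, {x | q x ≤ k}.Finite)
    (S : Set α) (k : ℕ) : (S ∩ q ⁻¹' {k}).Finite :=
  (hq k).subset fun _ hx => le_of_eq hx.2

lemma finite_setOf_add_le {f : α → ℕ} {g : β → ℕ} (hf : ∀ k, {x | f x ≤ k}.Finite)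
    (hg : ∀ k, {y | g y ≤ k}.Finite) (k : ℕ) : {p : α × β | f p.1 + g p.2 ≤ k}.Finite :=
  ((hf k).prod (hg k)).subset fun p (hp : f p.1 + g p.2 ≤ k) =>
    ⟨show f p.1 ≤ k by omega, show g p.2 ≤ k by omega⟩

lemma thetaSeries_eq_of_bijOn {q : α → ℕ} {q' : β → ℕ} {S : Set α} {T : Set β} {f : α → β}
    (hf : BijOn f S T) (hq : ∀ x ∈ S, q' (f x) = q x) :
    thetaSeries q' T = thetaSeries q S := by
  ext k
  simp only [coeff_thetaSeries]
  rw [← BijOn.ncard_eq (s := S ∩ q ⁻¹' {k}) ⟨?_, hf.injOn.mono inter_subset_left, ?_⟩]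
  · rintro x ⟨hx, rfl⟩
    exact ⟨hf.mapsTo hx, hq x hx⟩
  · rintro y ⟨hy, rfl⟩
    obtain ⟨x, hx, rfl⟩ := hf.surjOn hy
    exact ⟨x, ⟨hx, (hq x hx).symm⟩, rfl⟩

lemma thetaSeries_iUnion [Fintype ι] {q : α → ℕ} (hq : ∀ k, {x | q x ≤ k}.Finite)
    {S : ι → Set α} (hS : Pairwise (Disjoint on S)) :
    thetaSeries q (⋃ i, S i) = ∑ i, thetaSeries q (S i) := by
  ext k
  rw [coeff_thetaSeries, map_sum, iUnion_inter,
    ncard_iUnion_of_finite (fun i => finite_inter_preimage_singleton hq _ k)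
      (fun i j hij => (hS hij).mono inter_subset_left inter_subset_left),
    finsum_eq_sum_of_fintype]
  simp

lemma thetaSeries_prod {f : α → ℕ} {g : β → ℕ} (hf : ∀ k, {x | f x ≤ k}.Finite)
    (hg : ∀ k, {y | g y ≤ k}.Finite) (S : Set α) (T : Set β) :
    thetaSeries (fun p => f p.1 + g p.2) (S ×ˢ T) = thetaSeries f S * thetaSeries g T := by
  ext k
  have hsplit : S ×ˢ T ∩ (fun p : α × β => f p.1 + g p.2) ⁻¹' {k} =
      ⋃ ij ∈ (antidiagonal k : Set (ℕ × ℕ)),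
        (S ∩ f ⁻¹' {ij.1}) ×ˢ (T ∩ g ⁻¹' {ij.2}) := by
    ext ⟨x, y⟩
    simp only [mem_inter_iff, mem_prod, mem_preimage, mem_singleton_iff, mem_iUnion,
      Finset.mem_coe, Finset.HasAntidiagonal.mem_antidiagonal, exists_prop, Prod.exists]
    constructor
    · rintro ⟨⟨hx, hy⟩, rfl⟩
      exact ⟨f x, g y, rfl, ⟨hx, rfl⟩, hy, rfl⟩
    · rintro ⟨i, j, rfl, ⟨hx, rfl⟩, hy, rfl⟩
      exact ⟨⟨hx, hy⟩, rfl⟩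
  rw [coeff_thetaSeries, PowerSeries.coeff_mul, hsplit,
    (Finset.finite_toSet _).ncard_biUnion
      (fun ij _ => (finite_inter_preimage_singleton hf S _).prod
        (finite_inter_preimage_singleton hg T _)) ?_,
    finsum_mem_coe_finset]
  · simp [ncard_prod]
  · rintro ij - ij' - hne
    refine disjoint_left.mpr fun p hp hp' => hne ?_
    exact Prod.ext (hp.1.2.symm.trans hp'.1.2) (hp.2.2.symm.trans hp'.2.2)

end ThetaSeries

lemma Qform_nonneg {d : ℕ} (hd : 1 ≤ d) (x y : ℤ) : 0 ≤ Qform d x y := by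
  have : (1 : ℤ) ≤ d := by exact_mod_cast hd
  unfold Qform
  nlinarith [sq_nonneg (2 * x + y), sq_nonneg y]

def normQ (d : ℕ) (x : ℤ × ℤ) : ℕ := (Qform d x.1 x.2).toNat

lemma normQ_cast {d : ℕ} (hd : 1 ≤ d) (x : ℤ × ℤ) : (normQ d x : ℤ) = Qform d x.1 x.2 :=
  Int.toNat_of_nonneg (Qform_nonneg hd _ _)

lemma finite_setOf_normQ_le {d : ℕ} (hd : 1 ≤ d) (k : ℕ) : {x | normQ d x ≤ k}.Finite := by
  have hd' : (1 : ℤ) ≤ d := by exact_mod_cast hd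
  refine (Set.finite_Icc (-(k + 1 : ℤ), -(k + 1 : ℤ)) (k + 1, k + 1)).subset ?_
  rintro ⟨x, y⟩ (hxy : normQ d (x, y) ≤ k)
  have hQ : x ^ 2 + x * y + d * y ^ 2 ≤ k := by
    have := normQ_cast hd (x, y); simp only [Qform] at this; omega
  have hx : x ^ 2 ≤ 4 * k := by nlinarith [sq_nonneg (x + 2 * y)]
  have hy : y ^ 2 ≤ 4 * k := by nlinarith [sq_nonneg (2 * x + y)]
  refine ⟨⟨?_, ?_⟩, ?_, ?_⟩ <;> dsimp only <;> nlinarith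

abbrev V6 : Type := (ℤ × ℤ) × (ℤ × ℤ) × (ℤ × ℤ)

def residue (x : ℤ × ℤ) : ZMod 3 × ZMod 3 := (x.1, x.2)

def theta (d : ℕ) (r : ZMod 3 × ZMod 3) : PowerSeries ℤ :=
  thetaSeries (normQ d) (residue ⁻¹' {r})

lemma residue_eq_iff (x : ℤ × ℤ) (a b : ℤ) :
    residue x = ((a : ZMod 3), (b : ZMod 3)) ↔ 3 ∣ a - x.1 ∧ 3 ∣ b - x.2 := by
  simp only [residue, Prod.mk.injEq, ZMod.intCast_eq_intCast_iff_dvd_sub, Nat.cast_ofNat]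

lemma cosetTheta_eq_theta {d : ℕ} (hd : 1 ≤ d) (a b : ℤ) :
    cosetTheta 3 d a b = theta d (a, b) := by
  have hcoset : cosetTheta 3 d a b =
      thetaSeries (fun mn : ℤ × ℤ => normQ d (3 * mn.1 + a, 3 * mn.2 + b)) Set.univ := by
    ext k
    simp only [cosetTheta, PowerSeries.coeff_mk, coeff_thetaSeries, Set.univ_inter]
    congr 2
    ext mn
    simp only [Set.mem_ofPred_eq, Set.mem_preimage, Set.mem_singleton_iff, ← Int.ofNat_inj,
      normQ_cast hd]
    rfl
  rw [hcoset, theta]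
  symm
  refine thetaSeries_eq_of_bijOn (f := fun mn => (3 * mn.1 + a, 3 * mn.2 + b))
    (S := Set.univ) (T := residue ⁻¹' {((a : ZMod 3), (b : ZMod 3))})
    ⟨fun mn _ => ?_, fun mn _ mn' _ h => ?_, fun x hx => ?_⟩ fun _ _ => rfl
  · simp only [Set.mem_preimage, Set.mem_singleton_iff, residue_eq_iff]; omega
  · simp only [Prod.mk.injEq] at h; exact Prod.ext (by omega) (by omega)
  · simp only [Set.mem_preimage, Set.mem_singleton_iff, residue_eq_iff] at hx
    exact ⟨((x.1 - a) / 3, (x.2 - b) / 3), trivial,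
      Prod.ext (by dsimp only; omega) (by dsimp only; omega)⟩

lemma theta_eq_of_involutive {d : ℕ} {σ : ℤ × ℤ → ℤ × ℤ}
    {τ : ZMod 3 × ZMod 3 → ZMod 3 × ZMod 3}
    (hσ : Function.Involutive σ) (hτ : Function.Involutive τ)
    (hres : ∀ x, residue (σ x) = τ (residue x)) (hQ : ∀ x, normQ d (σ x) = normQ d x)
    (r : ZMod 3 × ZMod 3) : theta d (τ r) = theta d r := by
  refine thetaSeries_eq_of_bijOn (Set.InvOn.bijOn (f' := σ) ⟨fun x _ => hσ x, fun x _ => hσ x⟩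
    ?_ ?_) fun x _ => hQ x
  · intro x (hx : residue x = r)
    show residue (σ x) = τ r
    rw [hres, hx]
  · intro x (hx : residue x = τ r)
    show residue (σ x) = r
    rw [hres, hx, hτ]

lemma theta_neg (d : ℕ) (r : ZMod 3 × ZMod 3) : theta d (-r) = theta d r :=
  theta_eq_of_involutive neg_involutive neg_involutive
    (fun x => by simp [residue])
    (fun x => by simp only [normQ, Qform, Prod.fst_neg, Prod.snd_neg]; ring_nf) r

lemma theta_reflect (d : ℕ) (r : ZMod 3 × ZMod 3) : theta d (-r.1 - r.2, r.2) = theta d r :=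
  theta_eq_of_involutive (σ := fun x => (-x.1 - x.2, x.2)) (τ := fun r => (-r.1 - r.2, r.2))
    (fun x => by simp) (fun r => by simp)
    (fun x => by simp [residue]) (fun x => by simp only [normQ, Qform]; ring_nf) r

/-- The orbits of residues under `r ↦ -r` and `(a, b) ↦ (-a-b, b)`, numbered as the variables
`X, Y, Z, W` of `P1` and `P2`. -/
def residueClass (r : ZMod 3 × ZMod 3) : Fin 4 :=
  if r = 0 then 0 else if r.2 = 0 then 1 else if r.1 = r.2 then 3 else 2

lemma T3_eq_theta {d : ℕ} (hd : 1 ≤ d) :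
    T3 d = ![theta d (0, 0), theta d (1, 0), theta d (0, 1), theta d (1, 1)] := by
  simp [T3, cosetTheta_eq_theta hd]

lemma theta_eq_T3 {d : ℕ} (hd : 1 ≤ d) (r : ZMod 3 × ZMod 3) :
    theta d r = T3 d (residueClass r) := by
  have h21 : theta d (2, 1) = theta d (0, 1) := theta_reflect d (0, 1)
  have hcases : ∀ c : ZMod 3, c = 0 ∨ c = 1 ∨ c = 2 := by decide
  obtain ⟨a, b⟩ := r
  rw [T3_eq_theta hd]
  rcases hcases a with rfl | rfl | rfl <;> rcases hcases b with rfl | rfl | rfl <;>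
    simp +decide only [residueClass, ↓reduceIte, Matrix.cons_val]
  · rw [show ((0, 2) : ZMod 3 × ZMod 3) = -(0, 1) by decide, theta_neg]
  · rw [show ((1, 2) : ZMod 3 × ZMod 3) = -(2, 1) by decide, theta_neg, h21]
  · rw [show ((2, 0) : ZMod 3 × ZMod 3) = -(1, 0) by decide, theta_neg]
  · exact h21
  · rw [show ((2, 2) : ZMod 3 × ZMod 3) = -(1, 1) by decide, theta_neg]

abbrev Word : Type := (ZMod 3 × ZMod 3) × (ZMod 3 × ZMod 3) × (ZMod 3 × ZMod 3)

open MvPolynomial in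
def symmWeightEnumerator {ι : Type*} [Fintype ι] (G : ι → Word) : MvPolynomial (Fin 4) ℤ :=
  ∑ m, X (residueClass (G m).1) * X (residueClass (G m).2.1) * X (residueClass (G m).2.2)

def encode1 (m : ZMod 3 × ZMod 3 × ZMod 3) : Word :=
  ((0, m.1), (m.2.1, m.2.2), (-m.2.1, m.2.2 - m.2.1))

def encode2 (m : ZMod 3 × ZMod 3 × ZMod 3) : Word :=
  ((m.1 - m.2.1 - m.2.2, m.2.1 + m.2.2), (m.1, m.2.1), (m.1, m.2.2))

lemma sum_zmod_three {M : Type*} [AddCommMonoid M] (f : ZMod 3 → M) :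
    ∑ x, f x = f 0 + f 1 + f 2 :=
  Fin.sum_univ_three f

lemma symmWeightEnumerator_encode1 : symmWeightEnumerator encode1 = P1 := by
  simp only [symmWeightEnumerator, Fintype.sum_prod_type, sum_zmod_three, encode1]
  simp +decide only [residueClass, ↓reduceIte]
  rw [P1]
  ring

lemma symmWeightEnumerator_encode2 : symmWeightEnumerator encode2 = P2 := by
  simp only [symmWeightEnumerator, Fintype.sum_prod_type, sum_zmod_three, encode2]
  simp +decide only [residueClass, ↓reduceIte]
  rw [P2]
  ring

def residue3 (v : V6) : Word := (residue v.1, residue v.2.1, residue v.2.2)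

def normQ3 (d : ℕ) (v : V6) : ℕ := normQ d v.1 + (normQ d v.2.1 + normQ d v.2.2)

def codeLattice {ι : Type*} (G : ι → Word) : Set V6 := residue3 ⁻¹' Set.range G

lemma finite_setOf_normQ3_le {d : ℕ} (hd : 1 ≤ d) (k : ℕ) : {v | normQ3 d v ≤ k}.Finite :=
  finite_setOf_add_le (finite_setOf_normQ_le hd)
    (finite_setOf_add_le (finite_setOf_normQ_le hd) (finite_setOf_normQ_le hd)) k

lemma thetaSeries_residue3_preimage {d : ℕ} (hd : 1 ≤ d) (w : Word) :
    thetaSeries (normQ3 d) (residue3 ⁻¹' {w}) = theta d w.1 * theta d w.2.1 * theta d w.2.2 := by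
  have hprod : residue3 ⁻¹' {w} =
      (residue ⁻¹' {w.1}) ×ˢ ((residue ⁻¹' {w.2.1}) ×ˢ (residue ⁻¹' {w.2.2})) := by
    ext v
    simp [residue3, Prod.ext_iff]
  have hfin := finite_setOf_normQ_le hd
  rw [hprod, mul_assoc, theta, theta, theta, ← thetaSeries_prod hfin hfin,
    ← thetaSeries_prod hfin (finite_setOf_add_le hfin hfin)]
  rfl

lemma thetaSeries_codeLattice {d : ℕ} (hd : 1 ≤ d) {ι : Type*} [Fintype ι] {G : ι → Word}
    (hG : Function.Injective G) :
    thetaSeries (normQ3 d) (codeLattice G) =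
      ∑ m, theta d (G m).1 * theta d (G m).2.1 * theta d (G m).2.2 := by
  rw [codeLattice, ← Set.iUnion_singleton_eq_range, Set.preimage_iUnion,
    thetaSeries_iUnion (finite_setOf_normQ3_le hd)
      fun m m' hm => (Set.disjoint_singleton.mpr (hG.ne hm)).preimage residue3]
  simp only [thetaSeries_residue3_preimage hd]

lemma aeval_T3_symmWeightEnumerator {d : ℕ} (hd : 1 ≤ d) {ι : Type*} [Fintype ι]
    {G : ι → Word} (hG : Function.Injective G) :
    MvPolynomial.aeval (T3 d) (symmWeightEnumerator G) =
      thetaSeries (normQ3 d) (codeLattice G) := by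
  simp [symmWeightEnumerator, thetaSeries_codeLattice hd hG, theta_eq_T3 hd]

lemma encode1_injective : Function.Injective encode1 := by
  rintro ⟨t, a, b⟩ ⟨t', a', b'⟩ h
  simp only [encode1, Prod.mk.injEq] at h
  obtain ⟨⟨-, rfl⟩, ⟨rfl, rfl⟩, -⟩ := h
  rfl

lemma encode2_injective : Function.Injective encode2 := by
  rintro ⟨a, b, s⟩ ⟨a', b', s'⟩ h
  simp only [encode2, Prod.mk.injEq] at h
  obtain ⟨-, ⟨rfl, rfl⟩, -, rfl⟩ := h
  rfl

lemma aeval_T3_P1 {d : ℕ} (hd : 1 ≤ d) :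
    MvPolynomial.aeval (T3 d) P1 = thetaSeries (normQ3 d) (codeLattice encode1) := by
  rw [← symmWeightEnumerator_encode1, aeval_T3_symmWeightEnumerator hd encode1_injective]

lemma aeval_T3_P2 {d : ℕ} (hd : 1 ≤ d) :
    MvPolynomial.aeval (T3 d) P2 = thetaSeries (normQ3 d) (codeLattice encode2) := by
  rw [← symmWeightEnumerator_encode2, aeval_T3_symmWeightEnumerator hd encode2_injective]

lemma range_encode1 : Set.range encode1 =
    {w | w.1.1 = 0 ∧ w.2.1.1 + w.2.2.1 = 0 ∧ w.2.1.2 + w.2.2.1 + 2 * w.2.2.2 = 0} := by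
  ext ⟨⟨x1, y1⟩, ⟨x2, y2⟩, x3, y3⟩
  simp only [Set.mem_range, Set.mem_ofPred_eq, encode1, Prod.exists, Prod.mk.injEq]
  constructor
  · rintro ⟨t, a, b, ⟨rfl, rfl⟩, ⟨rfl, rfl⟩, rfl, rfl⟩
    revert a b; decide
  · rintro ⟨rfl, h2, h3⟩
    refine ⟨y1, x2, y2, ⟨rfl, rfl⟩, ⟨rfl, rfl⟩, ?_⟩
    revert x2 y2 x3 y3; decide

lemma range_encode2 : Set.range encode2 =
    {w | w.2.1.1 + 2 * w.2.2.1 = 0 ∧ w.1.2 + 2 * w.2.1.2 + 2 * w.2.2.2 = 0 ∧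
      w.1.1 + w.2.1.2 + 2 * w.2.2.1 + w.2.2.2 = 0} := by
  ext ⟨⟨x1, y1⟩, ⟨x2, y2⟩, x3, y3⟩
  simp only [Set.mem_range, Set.mem_ofPred_eq, encode2, Prod.exists, Prod.mk.injEq]
  constructor
  · rintro ⟨a, b, s, ⟨rfl, rfl⟩, ⟨rfl, rfl⟩, rfl, rfl⟩
    revert a b s; decide
  · rintro ⟨h1, h2, h3⟩
    refine ⟨x2, y2, y3, ⟨?_, ?_⟩, ⟨rfl, rfl⟩, ?_, rfl⟩
    · clear h2; decide +revert
    · clear h1 h3; decide +revert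
    · clear h2 h3; decide +revert

lemma intCast_zmod_three_eq_zero_iff (x : ℤ) : (x : ZMod 3) = 0 ↔ 3 ∣ x := by
  exact_mod_cast ZMod.intCast_zmod_eq_zero_iff_dvd x 3

lemma mem_codeLattice_encode1 (v : V6) : v ∈ codeLattice encode1 ↔
    3 ∣ v.1.1 ∧ 3 ∣ v.2.1.1 + v.2.2.1 ∧ 3 ∣ v.2.1.2 + v.2.2.1 + 2 * v.2.2.2 := by
  simp only [← intCast_zmod_three_eq_zero_iff]
  push_cast
  rw [codeLattice, Set.mem_preimage, range_encode1]
  rfl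

lemma mem_codeLattice_encode2 (v : V6) : v ∈ codeLattice encode2 ↔
    3 ∣ v.2.1.1 + 2 * v.2.2.1 ∧ 3 ∣ v.1.2 + 2 * v.2.1.2 + 2 * v.2.2.2 ∧
      3 ∣ v.1.1 + v.2.1.2 + 2 * v.2.2.1 + v.2.2.2 := by
  simp only [← intCast_zmod_three_eq_zero_iff]
  push_cast
  rw [codeLattice, Set.mem_preimage, range_encode2]
  rfl

lemma normQ3_cast {d : ℕ} (hd : 1 ≤ d) (v : V6) :
    (normQ3 d v : ℤ) =
      Qform d v.1.1 v.1.2 + Qform d v.2.1.1 v.2.1.2 + Qform d v.2.2.1 v.2.2.2 := by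
  simp only [normQ3, Nat.cast_add, normQ_cast hd]
  ring

lemma normQ3_three_smul {d : ℕ} (hd : 1 ≤ d) (v : V6) :
    normQ3 d ((3 : ℤ) • v) = 9 * normQ3 d v := by
  zify
  simp only [normQ3_cast hd, Prod.smul_fst, Prod.smul_snd, smul_eq_mul, Qform]
  ring

/- `M` maps `Λ₁ = codeLattice encode1` onto `3 Λ₂`, `N` maps `Λ₂` onto `3 Λ₁`, `M N = N M = 9`,
and `Q(M v) = 9 Q(v)` for `d = 3`: so `v ↦ M v / 3` is an isometry `Λ₁ → Λ₂` with inverse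
`w ↦ N w / 3`. -/
def isoM (v : V6) : V6 :=
  match v with
  | ((x1, y1), (x2, y2), (x3, y3)) =>
    ((x1 + 3 * y1 + x2 - 3 * y2 + x3, -x1 + x2 + 2 * y2 + y3),
      (3 * y1 - x2 + 2 * y2 + x3 - 2 * y3, x1 + x2 + y2 - x3 - y3),
      (3 * y1 - x2 - y2 - 2 * x3 + y3, x1 + y2 + x3 + 2 * y3))

def isoN (v : V6) : V6 :=
  match v with
  | ((x1, y1), (x2, y2), (x3, y3)) =>
    ((-3 * y1 + 3 * y2 + 3 * y3, x1 + y1 + x2 + x3),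
      (2 * x1 + 3 * y1 - x2 + 2 * y2 - x3 - y3, -x1 + y1 + x2 + y2 + y3),
      (x1 + x2 - 2 * y2 - 2 * x3 + y3, y1 - x2 - y2 + x3 + 2 * y3))

def divThree (v : V6) : V6 :=
  ((v.1.1 / 3, v.1.2 / 3), (v.2.1.1 / 3, v.2.1.2 / 3), (v.2.2.1 / 3, v.2.2.2 / 3))

lemma normQ3_isoM (v : V6) : normQ3 3 (isoM v) = 9 * normQ3 3 v := by
  obtain ⟨⟨x1, y1⟩, ⟨x2, y2⟩, x3, y3⟩ := v
  zify
  simp only [normQ3_cast (by norm_num : 1 ≤ 3), isoM, Qform]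
  ring

lemma three_smul_divThree_isoM {v : V6} (hv : v ∈ codeLattice encode1) :
    (3 : ℤ) • divThree (isoM v) = isoM v := by
  obtain ⟨⟨x1, y1⟩, ⟨x2, y2⟩, x3, y3⟩ := v
  rw [mem_codeLattice_encode1] at hv
  simp only [isoM, divThree, Prod.smul_mk, smul_eq_mul, Prod.mk.injEq] at hv ⊢
  omega

lemma bijOn_divThree_isoM :
    Set.BijOn (divThree ∘ isoM) (codeLattice encode1) (codeLattice encode2) := by
  refine Set.InvOn.bijOn (f' := divThree ∘ isoN) ⟨?_, ?_⟩ ?_ ?_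
  · rintro ⟨⟨x1, y1⟩, ⟨x2, y2⟩, x3, y3⟩ hv
    rw [mem_codeLattice_encode1] at hv
    simp only [Function.comp, isoM, isoN, divThree, Prod.mk.injEq] at hv ⊢
    omega
  · rintro ⟨⟨x1, y1⟩, ⟨x2, y2⟩, x3, y3⟩ hv
    rw [mem_codeLattice_encode2] at hv
    simp only [Function.comp, isoM, isoN, divThree, Prod.mk.injEq] at hv ⊢
    omega
  · rintro ⟨⟨x1, y1⟩, ⟨x2, y2⟩, x3, y3⟩ hv
    rw [mem_codeLattice_encode1] at hv
    rw [mem_codeLattice_encode2]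
    simp only [Function.comp, isoM, divThree] at hv ⊢
    omega
  · rintro ⟨⟨x1, y1⟩, ⟨x2, y2⟩, x3, y3⟩ hv
    rw [mem_codeLattice_encode2] at hv
    rw [mem_codeLattice_encode1]
    simp only [Function.comp, isoN, divThree] at hv ⊢
    omega

lemma thetaSeries_codeLattice_encode1_eq_encode2 :
    thetaSeries (normQ3 3) (codeLattice encode1) =
      thetaSeries (normQ3 3) (codeLattice encode2) := by
  refine (thetaSeries_eq_of_bijOn bijOn_divThree_isoM fun v hv => ?_).symm
  have h := congrArg (normQ3 3) (three_smul_divThree_isoM hv)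
  rw [normQ3_three_smul (by norm_num : 1 ≤ 3), normQ3_isoM] at h
  exact Nat.eq_of_mul_eq_mul_left (by norm_num) h

lemma eq_zero_and_sq_le_of_Qform_six_le_three {x y : ℤ} (h : Qform 6 x y ≤ 3) :
    y = 0 ∧ x ^ 2 ≤ 3 := by
  unfold Qform at h
  push_cast at h
  have hy : y = 0 := by nlinarith [sq_nonneg (2 * x + y), sq_nonneg y]
  subst hy
  constructor <;> nlinarith

lemma normQ3_six_ne_three {v : V6} (hv : v ∈ codeLattice encode1) : normQ3 6 v ≠ 3 := by
  obtain ⟨⟨x1, y1⟩, ⟨x2, y2⟩, x3, y3⟩ := v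
  rw [mem_codeLattice_encode1] at hv
  intro h
  have hQ := normQ3_cast (by norm_num : 1 ≤ 6) ((x1, y1), (x2, y2), x3, y3)
  rw [h] at hQ
  simp only at hQ hv
  have n1 := Qform_nonneg (by norm_num : 1 ≤ 6) x1 y1
  have n2 := Qform_nonneg (by norm_num : 1 ≤ 6) x2 y2
  have n3 := Qform_nonneg (by norm_num : 1 ≤ 6) x3 y3
  obtain ⟨rfl, h1⟩ := eq_zero_and_sq_le_of_Qform_six_le_three (x := x1) (y := y1) (by omega)
  obtain ⟨rfl, h2⟩ := eq_zero_and_sq_le_of_Qform_six_le_three (x := x2) (y := y2) (by omega)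
  obtain ⟨rfl, h3⟩ := eq_zero_and_sq_le_of_Qform_six_le_three (x := x3) (y := y3) (by omega)
  simp only [Qform] at hQ
  have hbound : ∀ x : ℤ, x ^ 2 ≤ 3 → -1 ≤ x ∧ x ≤ 1 := fun x hx => ⟨by nlinarith, by nlinarith⟩
  obtain rfl : x1 = 0 := by have := hbound x1 h1; omega
  obtain rfl : x3 = 0 := by have := hbound x3 h3; omega
  have := hbound x2 h2
  push_cast at hQ
  nlinarith

lemma coeff_three_thetaSeries_codeLattice_encode1 :
    PowerSeries.coeff 3 (thetaSeries (normQ3 6) (codeLattice encode1)) = 0 := by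
  have hempty : codeLattice encode1 ∩ normQ3 6 ⁻¹' {3} = ∅ :=
    Set.eq_empty_of_forall_notMem fun v hv => normQ3_six_ne_three hv.1 hv.2
  rw [coeff_thetaSeries, hempty, Set.ncard_empty, Nat.cast_zero]

lemma coeff_three_thetaSeries_codeLattice_encode2 :
    PowerSeries.coeff 3 (thetaSeries (normQ3 6) (codeLattice encode2)) ≠ 0 := by
  rw [coeff_thetaSeries, Nat.cast_ne_zero]
  refine Set.ncard_ne_zero_of_mem (a := ((1, 0), (1, 0), (1, 0))) ⟨?_, ?_⟩
    (finite_inter_preimage_singleton (finite_setOf_normQ3_le (by norm_num)) _ _)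
  · rw [mem_codeLattice_encode2]; norm_num
  · rfl

lemma P1_ne_P2 : P1 ≠ P2 := by
  intro h
  have h' := congrArg (MvPolynomial.eval ![0, 1, 0, 0]) h
  simp [P1, P2] at h'

theorem stmt17 :
    P1 ≠ P2 ∧
    MvPolynomial.aeval (T3 3) P1 = MvPolynomial.aeval (T3 3) P2 ∧
    MvPolynomial.aeval (T3 6) P1 ≠ MvPolynomial.aeval (T3 6) P2 := by
  refine ⟨P1_ne_P2, ?_, ?_⟩
  · rw [aeval_T3_P1 (by norm_num), aeval_T3_P2 (by norm_num)]
    exact thetaSeries_codeLattice_encode1_eq_encode2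
  · rw [aeval_T3_P1 (by norm_num), aeval_T3_P2 (by norm_num)]
    intro h
    apply coeff_three_thetaSeries_codeLattice_encode2
    rw [← h, coeff_three_thetaSeries_codeLattice_encode1]
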